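/- arXiv:1204.3113 — 6 statements merged into one kernel-verified Lean document; each statement's English description precedes it below -/
import Mathlib

section
/- Let T_s be a DFS arborescence of a DAG G rooted at s spanning all descendants of s. If s1 and s2 are two distinct children of s in T_s, u ∈ T_{s1} and v ∈ T_{s2}, then s is a junction of u and v in G, and s is the lowest common ancestor of u and v in T_s. -/
variable {V : Type*}

/-- A directed graph (given as a relation) is acyclic: no nontrivial closed directed walk. -/
def Acyclic (G : V → V → Prop) : Prop := Irreflexive (Relation.TransGen G)

/-- `l` is a directed path in `G` from `a` to `b`: consecutive vertices are joined by arcs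
of `G` and no vertex is repeated. -/
def IsDipath (G : V → V → Prop) (l : List V) (a b : V) : Prop :=
  l.Chain' G ∧ l.head? = some a ∧ l.getLast? = some b ∧ l.Nodup

/-- The internal vertices of a path (all vertices except the two endpoints). -/
def internalVerts (l : List V) : List V := l.tail.dropLast

/-- `s` is a junction of the pair of distinct vertices `u, v` in `G`: there are directed
paths from `s` to `u` and from `s` to `v` sharing no vertex other than `s`. -/
def IsJunction (G : V → V → Prop) (s u v : V) : Prop :=
  u ≠ v ∧ ∃ p q : List V, IsDipath G p s u ∧ IsDipath G q s v ∧
    ∀ x, x ∈ p → x ∈ q → x = s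

/-- `z` is the lowest common ancestor of `u` and `v` in the tree (arborescence) `T`:
a common ancestor that is a descendant of every common ancestor. -/
def IsTreeLCA (T : V → V → Prop) (u v z : V) : Prop :=
  Relation.ReflTransGen T z u ∧ Relation.ReflTransGen T z v ∧
    ∀ y, Relation.ReflTransGen T y u → Relation.ReflTransGen T y v →
      Relation.ReflTransGen T y z

/-- `s` is a lowest common ancestor of `u, v` in the DAG `G`: a junction of `u, v` such
that there is no directed path from `s` to any other junction of `u, v`. -/
def IsLCA (G : V → V → Prop) (s u v : V) : Prop :=
  IsJunction G s u v ∧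
    ∀ s', s' ≠ s → IsJunction G s' u v → ¬ Relation.TransGen G s s'

/-- A DFS arborescence of `G` rooted at `s`, spanning all descendants of `s`, together
with its post-order numbering and the standard structural properties of depth-first
search: tree arcs are graph arcs, the root has no parent, parents are unique, every
`G`-descendant of `s` is in the tree, `post` is injective on the tree, `post` strictly
decreases from a vertex to its proper tree descendants, the post-order numbers of each
subtree form a contiguous interval, and every graph arc between tree vertices is a
tree/forward arc, a back arc, or a (post-order decreasing) cross arc. -/
structure DFSArborescence (G : V → V → Prop) (s : V) where
  T : V → V → Prop
  post : V → ℕ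
  sub : ∀ ⦃a b⦄, T a b → G a b
  root_no_parent : ∀ a, ¬ T a s
  unique_parent : ∀ ⦃a b c⦄, T a b → T c b → a = c
  verts_reach : ∀ ⦃a b⦄, T a b → Relation.ReflTransGen T s a
  spans : ∀ ⦃v⦄, Relation.ReflTransGen G s v → Relation.ReflTransGen T s v
  post_inj : ∀ ⦃u v⦄, Relation.ReflTransGen T s u → Relation.ReflTransGen T s v →
      post u = post v → u = v
  post_desc : ∀ ⦃u v⦄, Relation.ReflTransGen T s u → Relation.TransGen T u v →
      post v < post u
  post_contig : ∀ ⦃u v x⦄, Relation.ReflTransGen T s u → Relation.ReflTransGen T u v →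
      Relation.ReflTransGen T s x → post v ≤ post x → post x ≤ post u →
      Relation.ReflTransGen T u x
  arc_classify : ∀ ⦃u v⦄, G u v → Relation.ReflTransGen T s u →
      Relation.ReflTransGen T s v →
      Relation.ReflTransGen T u v ∨ Relation.ReflTransGen T v u ∨ post v < post u

/-! Since tree parents are unique, the subtrees below two distinct children of `s` are disjoint,
so every common tree ancestor of `u` and `v` lies above `s`: thus `s` is their tree LCA. The tree
paths from `s` to `u` and to `v` are directed paths of `G`, and a vertex on both is a common
ancestor of `u` and `v`, hence equal to the root `s`. -/

open Relation

section Paths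

variable {T G : V → V → Prop}

theorem IsDipath.mono (hTG : ∀ ⦃a b⦄, T a b → G a b) {l : List V} {a b : V}
    (h : IsDipath T l a b) : IsDipath G l a b :=
  ⟨h.1.imp hTG, h.2⟩

theorem exists_isDipath_of_reflTransGen {a b : V}
    (hacyc : ∀ ⦃x⦄, ReflTransGen T a x → ¬ TransGen T x x) (h : ReflTransGen T a b) :
    ∃ l, IsDipath T l a b ∧ ∀ x ∈ l, ReflTransGen T a x ∧ ReflTransGen T x b := by
  induction h using ReflTransGen.head_induction_on with
  | refl => exact ⟨[b], ⟨List.isChain_singleton b, rfl, rfl, List.nodup_singleton b⟩,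
      by simp only [List.mem_singleton, forall_eq]; exact ⟨.refl, .refl⟩⟩
  | @head a c hac hcb ih =>
    obtain ⟨l, ⟨hchain, hhead, hlast, hnodup⟩, hmem⟩ :=
      ih fun x hcx => hacyc (.head hac hcx)
    have ha : a ∉ l := fun hal => hacyc .refl (.head' hac (hmem a hal).1)
    refine ⟨a :: l, ⟨?_, rfl, ?_, List.nodup_cons.2 ⟨ha, hnodup⟩⟩, ?_⟩
    · refine List.isChain_cons.2 ⟨fun y hy => ?_, hchain⟩
      rw [hhead, Option.mem_some_iff] at hy
      exact hy ▸ hac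
    · cases l <;> simp_all
    · intro x hx
      rcases List.mem_cons.1 hx with rfl | hxl
      · exact ⟨.refl, .head hac hcb⟩
      · exact ⟨.head hac (hmem x hxl).1, (hmem x hxl).2⟩

theorem reflTransGen_total_of_unique_parent
    (hup : ∀ ⦃a b c⦄, T a b → T c b → a = c)
    {a b u : V} (ha : ReflTransGen T a u) (hb : ReflTransGen T b u) :
    ReflTransGen T a b ∨ ReflTransGen T b a := by
  induction ha generalizing b with
  | refl => exact .inr hb
  | tail hac hcu ih =>
    rcases hb.cases_tail with rfl | ⟨d, hbd, hdu⟩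
    · exact .inl (hac.tail hcu)
    · exact ih (hup hdu hcu ▸ hbd)

end Paths

namespace DFSArborescence

variable {G : V → V → Prop} {s : V} (A : DFSArborescence G s)

theorem not_transGen_self ⦃x : V⦄ (hx : ReflTransGen A.T s x) : ¬ TransGen A.T x x :=
  fun h => lt_irrefl _ (A.post_desc hx h)

theorem eq_root_of_reflTransGen {x : V} (h : ReflTransGen A.T x s) : x = s := by
  rcases h.cases_tail with rfl | ⟨w, _, hw⟩
  · rfl
  · exact absurd hw (A.root_no_parent w)

theorem children_eq_of_reflTransGen {a b x : V} (ha : A.T s a) (hb : A.T s b)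
    (hax : ReflTransGen A.T a x) (hbx : ReflTransGen A.T b x) : a = b := by
  have of_reach_child : ∀ {a b}, A.T s a → A.T s b → ReflTransGen A.T a b → a = b := by
    intro a b ha hb hab
    rcases hab.cases_tail with rfl | ⟨w, haw, hwb⟩
    · rfl
    · obtain rfl : w = s := A.unique_parent hwb hb
      exact absurd (TransGen.head' ha haw) (A.not_transGen_self .refl)
  rcases reflTransGen_total_of_unique_parent A.unique_parent hax hbx with hab | hba
  · exact of_reach_child ha hb hab
  · exact (of_reach_child hb ha hba).symm

theorem isTreeLCA_of_children {s₁ s₂ u v : V} (h₁ : A.T s s₁) (h₂ : A.T s s₂)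
    (h₁₂ : s₁ ≠ s₂) (hu : ReflTransGen A.T s₁ u) (hv : ReflTransGen A.T s₂ v) :
    IsTreeLCA A.T u v s := by
  refine ⟨.head h₁ hu, .head h₂ hv, fun y hyu hyv => ?_⟩
  rcases reflTransGen_total_of_unique_parent A.unique_parent hyu (.head h₁ hu) with hys | hsy
  · exact hys
  · rcases hsy.cases_head with rfl | ⟨c, hsc, hcy⟩
    · exact .refl
    · -- the child of `s` above `y` would have to be both `s₁` and `s₂`
      have hc₁ := A.children_eq_of_reflTransGen hsc h₁ (hcy.trans hyu) hu
      have hc₂ := A.children_eq_of_reflTransGen hsc h₂ (hcy.trans hyv) hv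
      exact absurd (hc₁.symm.trans hc₂) h₁₂

end DFSArborescence

theorem stmt2_general (G : V → V → Prop) (s : V) (A : DFSArborescence G s)
    (s1 s2 : V) (h1 : A.T s s1) (h2 : A.T s s2) (h12 : s1 ≠ s2)
    (u v : V) (hu : Relation.ReflTransGen A.T s1 u)
    (hv : Relation.ReflTransGen A.T s2 v) :
    IsJunction G s u v ∧ IsTreeLCA A.T u v s := by
  have hlca := A.isTreeLCA_of_children h1 h2 h12 hu hv
  obtain ⟨p, hp, hpu⟩ := exists_isDipath_of_reflTransGen A.not_transGen_self hlca.1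
  obtain ⟨q, hq, hqv⟩ := exists_isDipath_of_reflTransGen A.not_transGen_self hlca.2.1
  have huv : u ≠ v := fun huv => h12 (A.children_eq_of_reflTransGen h1 h2 hu (huv ▸ hv))
  refine ⟨⟨huv, p, q, hp.mono A.sub, hq.mono A.sub, fun x hxp hxq => ?_⟩, hlca⟩
  exact A.eq_root_of_reflTransGen (hlca.2.2 x (hpu x hxp).2 (hqv x hxq).2)

/-- If `u` and `v` lie in subarborescences rooted at distinct children of `s`,
then `s` is a junction of `u, v` in `G` and `s = LCA_{T_s}(u,v)`. -/
theorem stmt2 (G : V → V → Prop) (hG : Acyclic G) (s : V) (A : DFSArborescence G s)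
    (s1 s2 : V) (h1 : A.T s s1) (h2 : A.T s s2) (h12 : s1 ≠ s2)
    (u v : V) (hu : Relation.ReflTransGen A.T s1 u)
    (hv : Relation.ReflTransGen A.T s2 v) :
    IsJunction G s u v ∧ IsTreeLCA A.T u v s :=
  stmt2_general G s A s1 s2 h1 h2 h12 u v hu hv
end

section
/- Let T_s be a DFS arborescence of a DAG G rooted at s, let s1 be a child of s in T_s, and let u ∈ T_{s1}. If P = (s = u_0, u_1, ..., u_{k-1} = u) is any directed path in G from s to u, and u_i is the first vertex of P belonging to T_{s1}, then all subsequent vertices u_{i+1}, ..., u_{k-1} of P also belong to T_{s1}. -/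
variable {V : Type*}

/-! Along the arcs of a DAG, DFS post-order numbers strictly decrease: a tree or forward arc goes
down the tree, a back arc would close a cycle, and a cross arc decreases them by the defining
property of depth-first search. The subarborescence `T_{s1}` occupies an interval of post-order
numbers, bounded above by `post s1` and below by the number of any of its vertices. A vertex of
the path after `u_i` is reachable from `u_i` and reaches `u`, so its number lies between
`post u` and `post u_i ≤ post s1`, and therefore it belongs to `T_{s1}`. -/

theorem List.IsChain.reflTransGen_get {α : Type*} {r : α → α → Prop} {l : List α}
    (h : l.IsChain r) {a b : Fin l.length} (hab : a ≤ b) :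
    Relation.ReflTransGen r (l.get a) (l.get b) := by
  rcases hab.lt_or_eq with hlt | rfl
  · exact (h.imp fun _ _ => Relation.ReflTransGen.single).pairwise.rel_get_of_lt hlt
  · exact .refl

namespace IsDipath

variable {G : V → V → Prop} {p : List V} {a b : V}

lemma reflTransGen_get_left (hp : IsDipath G p a b) (k : Fin p.length) :
    Relation.ReflTransGen G a (p.get k) := by
  have hlen : 0 < p.length := k.pos
  have ha : p.get ⟨0, hlen⟩ = a := by
    simpa [List.head?_eq_getElem?, List.getElem?_eq_getElem, hlen] using hp.2.1
  exact ha ▸ hp.1.reflTransGen_get (Fin.mk_le_mk.mpr k.val.zero_le)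

lemma reflTransGen_get_right (hp : IsDipath G p a b) (k : Fin p.length) :
    Relation.ReflTransGen G (p.get k) b := by
  have hlen : 0 < p.length := k.pos
  have hb : p.get ⟨p.length - 1, by omega⟩ = b := by
    simpa [List.getLast?_eq_getElem?, List.getElem?_eq_getElem, hlen] using hp.2.2.1
  exact hb ▸ hp.1.reflTransGen_get (Fin.mk_le_mk.mpr (Nat.le_sub_one_of_lt k.isLt))

end IsDipath

namespace DFSArborescence

variable {G : V → V → Prop} {s : V} (A : DFSArborescence G s)

lemma reflTransGen_G_of_reflTransGen_T {a b : V} (h : Relation.ReflTransGen A.T a b) :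
    Relation.ReflTransGen G a b :=
  Relation.ReflTransGen.mono (fun _ _ => (A.sub ·)) _ _ h

lemma root_reflTransGen_T_of_reflTransGen_T {a b : V} (hab : Relation.ReflTransGen A.T a b)
    (hb : Relation.ReflTransGen A.T s b) : Relation.ReflTransGen A.T s a := by
  rcases hab.cases_head with rfl | ⟨c, hac, -⟩
  · exact hb
  · exact A.verts_reach hac

lemma post_le_of_reflTransGen_T {a b : V} (ha : Relation.ReflTransGen A.T s a)
    (hab : Relation.ReflTransGen A.T a b) : A.post b ≤ A.post a := by
  rcases Relation.reflTransGen_iff_eq_or_transGen.mp hab with rfl | h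
  · exact le_rfl
  · exact (A.post_desc ha h).le

lemma post_lt_of_arc (hG : Acyclic G) {x y : V} (hx : Relation.ReflTransGen A.T s x)
    (hxy : G x y) : A.post y < A.post x := by
  have hy : Relation.ReflTransGen A.T s y :=
    A.spans ((A.reflTransGen_G_of_reflTransGen_T hx).tail hxy)
  rcases A.arc_classify hxy hx hy with hfwd | hback | hcross
  · rcases Relation.reflTransGen_iff_eq_or_transGen.mp hfwd with rfl | h
    · exact absurd (.single hxy) (hG _)
    · exact A.post_desc hx h
  · exact absurd (.tail' (A.reflTransGen_G_of_reflTransGen_T hback) hxy) (hG y)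
  · exact hcross

lemma post_le_of_reflTransGen (hG : Acyclic G) {x y : V} (hx : Relation.ReflTransGen A.T s x)
    (hxy : Relation.ReflTransGen G x y) : A.post y ≤ A.post x := by
  induction hxy with
  | refl => exact le_rfl
  | @tail m z hxm hmz ih =>
    have hm : Relation.ReflTransGen A.T s m :=
      A.spans ((A.reflTransGen_G_of_reflTransGen_T hx).trans hxm)
    exact (A.post_lt_of_arc hG hm hmz).le.trans ih

lemma reflTransGen_T_of_between (hG : Acyclic G) {w x y u : V}
    (hw : Relation.ReflTransGen A.T s w) (hx : Relation.ReflTransGen A.T w x)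
    (hu : Relation.ReflTransGen A.T w u) (hxy : Relation.ReflTransGen G x y)
    (hyu : Relation.ReflTransGen G y u) : Relation.ReflTransGen A.T w y := by
  have hsx : Relation.ReflTransGen A.T s x := hw.trans hx
  have hsy : Relation.ReflTransGen A.T s y :=
    A.spans ((A.reflTransGen_G_of_reflTransGen_T hsx).trans hxy)
  refine A.post_contig hw hu hsy (A.post_le_of_reflTransGen hG hsy hyu) ?_
  calc A.post y ≤ A.post x := A.post_le_of_reflTransGen hG hsx hxy
    _ ≤ A.post w := A.post_le_of_reflTransGen_T hw hx

end DFSArborescence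

theorem stmt4_general (G : V → V → Prop) (hG : Acyclic G) (s : V) (A : DFSArborescence G s)
    (s1 : V) (u : V) (hu : Relation.ReflTransGen A.T s1 u)
    (p : List V) (hp : IsDipath G p s u)
    (i : ℕ) (hi : i < p.length)
    (hin : Relation.ReflTransGen A.T s1 (p.get ⟨i, hi⟩)) :
    ∀ j (hj : j < p.length), i ≤ j → Relation.ReflTransGen A.T s1 (p.get ⟨j, hj⟩) := by
  intro j hj hij
  have hs1 : Relation.ReflTransGen A.T s s1 :=
    A.root_reflTransGen_T_of_reflTransGen_T hin (A.spans (hp.reflTransGen_get_left _))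
  exact A.reflTransGen_T_of_between hG hs1 hin hu
    (hp.1.reflTransGen_get (Fin.mk_le_mk.mpr hij)) (hp.reflTransGen_get_right _)

/-- Once a directed path from `s` to `u ∈ T_{s1}` enters the subarborescence `T_{s1}`,
all its subsequent vertices stay in `T_{s1}`. -/
theorem stmt4 (G : V → V → Prop) (hG : Acyclic G) (s : V) (A : DFSArborescence G s)
    (s1 : V) (h1 : A.T s s1) (u : V) (hu : Relation.ReflTransGen A.T s1 u)
    (p : List V) (hp : IsDipath G p s u)
    (i : ℕ) (hi : i < p.length)
    (hin : Relation.ReflTransGen A.T s1 (p.get ⟨i, hi⟩))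
    (hfirst : ∀ j (hj : j < p.length), j < i →
      ¬ Relation.ReflTransGen A.T s1 (p.get ⟨j, hj⟩)) :
    ∀ j (hj : j < p.length), i ≤ j → Relation.ReflTransGen A.T s1 (p.get ⟨j, hj⟩) :=
  stmt4_general G hG s A s1 u hu p hp i hi hin
end

section
/- Let G be a DAG, s a vertex, T_s a DFS arborescence rooted at s, s1 a child of s, and u, v ∈ T_{s1} distinct vertices with s ∈ J(u,v). Then there exist internally vertex-disjoint directed paths in G from s to u and from s to v such that all internal vertices of at least one of the two paths lie in T_{s1}. -/
variable {V : Type*}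

/-!
Along every arc of the DAG the DFS post-order number decreases, and the subtree of `s1` is an
interval of post-order numbers; hence a walk between two vertices of the subtree stays inside it.
Take the junction paths `p` to `u` and `q` to `v`, and let `x` and `y` be their vertices in the
subtree with the largest post-order numbers. They are distinct, say `post x < post y`. Replacing
the part of `q` before `y` by the tree path `s → s1 → ⋯ → y` gives a path whose internal vertices
all lie in the subtree. Its new vertices have post-order number at least `post y`, while the
vertices of `p` in the subtree have at most `post x`, so it still meets `p` only in `s`.
-/

open Relation

namespace List

variable {α : Type*} {R : α → α → Prop} {l : List α} {a b z : α}

lemma IsChain.reflTransGen_of_head?_eq (hl : l.IsChain R) (ha : l.head? = some a)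
    (hz : z ∈ l) : ReflTransGen R a z :=
  hl.induction (ReflTransGen R a) l (fun _ _ hxy h => h.tail hxy)
    (fun hne => by simp_all [head?_eq_some_head hne, ReflTransGen.refl]) z hz

lemma IsChain.reflTransGen_of_getLast?_eq (hl : l.IsChain R) (hb : l.getLast? = some b)
    (hz : z ∈ l) : ReflTransGen R z b :=
  hl.backwards_induction (fun x => ReflTransGen R x b) l (fun _ _ hxy h => h.head hxy)
    (fun hne => by simp_all [getLast?_eq_some_getLast hne, ReflTransGen.refl]) z hz

lemma exists_mem_max_image {β : Type*} [LinearOrder β] {l : List α} {P : α → Prop}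
    (f : α → β) (h : ∃ a ∈ l, P a) : ∃ a ∈ l, P a ∧ ∀ b ∈ l, P b → f b ≤ f a := by
  classical
  obtain ⟨a, ha, hmax⟩ := Finset.exists_max_image {a ∈ l.toFinset | P a} f
    (let ⟨a, hal, hPa⟩ := h; ⟨a, by simp [hal, hPa]⟩)
  simp only [Finset.mem_filter, mem_toFinset] at ha hmax
  exact ⟨a, ha.1, ha.2, fun b hb hPb => hmax b ⟨hb, hPb⟩⟩

end List

lemma Acyclic.nodup_of_isChain {G : V → V → Prop} (hG : Acyclic G) {l : List V}
    (hl : l.IsChain G) : l.Nodup :=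
  (List.isChain_iff_pairwise.1 (hl.imp fun _ _ => TransGen.single)).imp fun h => by
    rintro rfl; exact hG _ h

namespace DFSArborescence

variable {G : V → V → Prop} {s : V} (A : DFSArborescence G s) {a b s1 v y z : V} {q : List V}

lemma reflTransGen_of_reflTransGen_T (h : ReflTransGen A.T a b) : ReflTransGen G a b :=
  ReflTransGen.mono (fun _ _ hab => A.sub hab) _ _ h

lemma post_lt_of_adj (hG : Acyclic G) (hs : ReflTransGen G s a) (hab : G a b) :
    A.post b < A.post a := by
  have ha := A.spans hs
  rcases A.arc_classify hab ha (A.spans (hs.tail hab)) with hfwd | hback | hcross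
  · rcases reflTransGen_iff_eq_or_transGen.1 hfwd with rfl | hfwd
    · exact (hG b (.single hab)).elim
    · exact A.post_desc ha hfwd
  · exact (hG b (.tail' (A.reflTransGen_of_reflTransGen_T hback) hab)).elim
  · exact hcross

lemma post_le_of_reflTransGen_s5 (hG : Acyclic G) (hs : ReflTransGen G s a)
    (hab : ReflTransGen G a b) : A.post b ≤ A.post a := by
  induction hab with
  | refl => exact le_rfl
  | tail hac hcb ih => exact (A.post_lt_of_adj hG (hs.trans hac) hcb).le.trans ih

lemma not_reflTransGen_root (h1 : A.T s s1) : ¬ ReflTransGen A.T s1 s := fun h =>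
  (A.post_desc .refl (.head' h1 h)).false

lemma reflTransGen_of_walk_between (hG : Acyclic G) (h1 : A.T s s1)
    (hy : ReflTransGen A.T s1 y) (hv : ReflTransGen A.T s1 v)
    (hyz : ReflTransGen G y z) (hzv : ReflTransGen G z v) : ReflTransGen A.T s1 z := by
  have hs1 : ReflTransGen G s s1 := .single (A.sub h1)
  have hs1y : ReflTransGen G s1 y := A.reflTransGen_of_reflTransGen_T hy
  have hsz : ReflTransGen G s z := (hs1.trans hs1y).trans hyz
  exact A.post_contig (.single h1) hv (A.spans hsz) (A.post_le_of_reflTransGen_s5 hG hsz hzv)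
    ((A.post_le_of_reflTransGen_s5 hG (hs1.trans hs1y) hyz).trans
      (A.post_le_of_reflTransGen_s5 hG hs1 hs1y))

/-- Replace the part of `q` before `y` by the tree path `s → s1 → ⋯ → y`. -/
lemma exists_dipath_through_tree (hG : Acyclic G) (h1 : A.T s s1) (hq : IsDipath G q s v)
    (hv : ReflTransGen A.T s1 v) (hy : y ∈ q) (hsy : ReflTransGen A.T s1 y) :
    ∃ q', IsDipath G q' s v ∧ (∀ a ∈ internalVerts q', ReflTransGen A.T s1 a) ∧
      ∀ a ∈ q', a = s ∨ a ∈ q ∨ (ReflTransGen A.T s1 a ∧ A.post y ≤ A.post a) := by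
  obtain ⟨hqc, -, hql, -⟩ := hq
  obtain ⟨q₁, q₂, rfl⟩ := List.append_of_mem hy
  obtain ⟨l, hl, hlast⟩ := List.exists_isChain_cons_of_relationReflTransGen hsy
  have hlast? : (s1 :: l).getLast? = some y := by
    rw [List.getLast?_eq_some_getLast (List.cons_ne_nil _ _), hlast]
  have htree : ∀ c ∈ s1 :: l, ReflTransGen A.T s1 c ∧ ReflTransGen A.T c y := fun c hc =>
    ⟨hl.reflTransGen_of_head?_eq rfl hc, hl.reflTransGen_of_getLast?_eq hlast? hc⟩
  have hsuf : (y :: q₂).IsChain G := hqc.right_of_append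
  have hsuf_last : (y :: q₂).getLast? = some v := by
    rwa [List.getLast?_append_cons] at hql
  have hsuf_sub : ∀ z ∈ y :: q₂, ReflTransGen A.T s1 z := fun z hz =>
    A.reflTransGen_of_walk_between hG h1 hsy hv (hsuf.reflTransGen_of_head?_eq rfl hz)
      (hsuf.reflTransGen_of_getLast?_eq hsuf_last hz)
  have hchain : (s :: (s1 :: l ++ q₂)).IsChain G := by
    refine List.isChain_cons_cons.2 ⟨A.sub h1, List.isChain_append.2
      ⟨hl.imp fun _ _ h => A.sub h, (List.isChain_cons.1 hsuf).2, ?_⟩⟩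
    rw [hlast?]
    exact fun _ hx => Option.some_inj.1 hx ▸ (List.isChain_cons.1 hsuf).1
  refine ⟨s :: (s1 :: l ++ q₂), ⟨hchain, rfl, ?_, hG.nodup_of_isChain hchain⟩, ?_, ?_⟩
  · rw [List.getLast?_cons, List.getLast?_append, hlast?]
    rw [List.getLast?_cons] at hsuf_last
    simpa using hsuf_last
  · intro a ha
    rcases List.mem_append.1 (List.mem_of_mem_dropLast ha) with ha | ha
    · exact (htree a ha).1
    · exact hsuf_sub a (List.mem_cons_of_mem _ ha)
  · intro a ha
    rcases List.mem_cons.1 ha with rfl | ha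
    · exact .inl rfl
    rcases List.mem_append.1 ha with ha | ha
    · refine .inr (.inr ⟨(htree a ha).1, A.post_le_of_reflTransGen_s5 hG ?_ ?_⟩)
      · exact .head (A.sub h1) (A.reflTransGen_of_reflTransGen_T (htree a ha).1)
      · exact A.reflTransGen_of_reflTransGen_T (htree a ha).2
    · exact .inr (.inl (List.mem_append_right _ (List.mem_cons_of_mem _ ha)))

lemma exists_dipath_disjoint_through_tree (hG : Acyclic G) (h1 : A.T s s1)
    (hq : IsDipath G q s v) (hv : ReflTransGen A.T s1 v) {p : List V}
    (hdisj : ∀ x, x ∈ p → x ∈ q → x = s) (hy : y ∈ q) (hsy : ReflTransGen A.T s1 y)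
    (hpy : ∀ a ∈ p, ReflTransGen A.T s1 a → A.post a < A.post y) :
    ∃ q', IsDipath G q' s v ∧ (∀ x, x ∈ p → x ∈ q' → x = s) ∧
      ∀ x ∈ internalVerts q', ReflTransGen A.T s1 x := by
  obtain ⟨q', hq', hint, hmem⟩ := A.exists_dipath_through_tree hG h1 hq hv hy hsy
  refine ⟨q', hq', fun a hap haq' => ?_, hint⟩
  rcases hmem a haq' with rfl | haq | ⟨hsa, hya⟩
  · rfl
  · exact hdisj a hap haq
  · exact ((hpy a hap hsa).trans_le hya).false.elim

end DFSArborescence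

theorem stmt5_general (G : V → V → Prop) (hG : Acyclic G) (s : V) (A : DFSArborescence G s)
    (s1 : V) (h1 : A.T s s1) (u v : V)
    (hu : Relation.ReflTransGen A.T s1 u) (hv : Relation.ReflTransGen A.T s1 v)
    (hJ : IsJunction G s u v) :
    ∃ p q : List V, IsDipath G p s u ∧ IsDipath G q s v ∧
      (∀ x, x ∈ p → x ∈ q → x = s) ∧
      ((∀ x ∈ internalVerts p, Relation.ReflTransGen A.T s1 x) ∨
       (∀ x ∈ internalVerts q, Relation.ReflTransGen A.T s1 x)) := by
  obtain ⟨-, p, q, hp, hq, hdisj⟩ := hJ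
  obtain ⟨x, hx, hsx, hxmax⟩ :=
    List.exists_mem_max_image A.post ⟨u, List.mem_of_getLast? hp.2.2.1, hu⟩
  obtain ⟨y, hy, hsy, hymax⟩ :=
    List.exists_mem_max_image A.post ⟨v, List.mem_of_getLast? hq.2.2.1, hv⟩
  have hsub {a : V} (h : ReflTransGen A.T s1 a) : ReflTransGen A.T s a := .head h1 h
  have hxy : A.post x ≠ A.post y := fun h => A.not_reflTransGen_root h1 <|
    hdisj x hx (A.post_inj (hsub hsx) (hsub hsy) h ▸ hy) ▸ hsx
  rcases hxy.lt_or_gt with hlt | hgt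
  · obtain ⟨q', hq', hdisj', hint⟩ := A.exists_dipath_disjoint_through_tree hG h1 hq hv hdisj hy
      hsy fun a ha hsa => (hxmax a ha hsa).trans_lt hlt
    exact ⟨p, q', hp, hq', hdisj', .inr hint⟩
  · obtain ⟨p', hp', hdisj', hint⟩ := A.exists_dipath_disjoint_through_tree hG h1 hp hu
      (fun a haq hap => hdisj a hap haq) hx hsx fun a ha hsa => (hymax a ha hsa).trans_lt hgt
    exact ⟨p', q, hp', hq, fun a hap haq => hdisj' a haq hap, .inl hint⟩

/-- If `s ∈ J(u,v)` with `u, v` in the subarborescence `T_{s1}`, then there are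
witnessing internally disjoint paths such that all internal vertices of one of
them lie in `T_{s1}`. -/
theorem stmt5 (G : V → V → Prop) (hG : Acyclic G) (s : V) (A : DFSArborescence G s)
    (s1 : V) (h1 : A.T s s1) (u v : V)
    (hu : Relation.ReflTransGen A.T s1 u) (hv : Relation.ReflTransGen A.T s1 v)
    (huv : u ≠ v) (hJ : IsJunction G s u v) :
    ∃ p q : List V, IsDipath G p s u ∧ IsDipath G q s v ∧
      (∀ x, x ∈ p → x ∈ q → x = s) ∧
      ((∀ x ∈ internalVerts p, Relation.ReflTransGen A.T s1 x) ∨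
       (∀ x ∈ internalVerts q, Relation.ReflTransGen A.T s1 x)) :=
  stmt5_general G hG s A s1 h1 u v hu hv hJ
end

section
/- (Lemma 3, converse direction) Let G be a DAG, and let s, z, u be vertices with z a proper ancestor of u in G. If there exists an in-neighbor t of u such that s ∈ J(z,t), then s ∈ J(z,u). -/
variable {V : Type*}

namespace IsDipath

variable {G : V → V → Prop} {l : List V} {a b : V}

theorem reflTransGen_of_mem (hl : IsDipath G l a b) {x : V} (hx : x ∈ l) :
    Relation.ReflTransGen G x b :=
  hl.1.backwards_induction (Relation.ReflTransGen G · b) l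
    (fun _ _ hxy hyb => hyb.head hxy)
    (fun hne => by rw [List.getLast_eq_iff_getLast?_eq_some hne |>.mpr hl.2.2.1]) x hx

theorem notMem_of_transGen (hG : Acyclic G) (hl : IsDipath G l a b) {c : V}
    (hbc : Relation.TransGen G b c) : c ∉ l :=
  fun hc => hG c (.trans_right (hl.reflTransGen_of_mem hc) hbc)

theorem concat (hl : IsDipath G l a b) {c : V} (hbc : G b c) (hc : c ∉ l) :
    IsDipath G (l ++ [c]) a c := by
  obtain ⟨hchain, hhead, hlast, hnodup⟩ := hl
  have hne : l ≠ [] := by rintro rfl; simp at hhead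
  refine ⟨hchain.append (List.isChain_singleton c) ?_, ?_, by simp, ?_⟩
  · simp [hlast, hbc]
  · rwa [List.head?_append_of_ne_nil _ hne]
  · exact hnodup.append (List.nodup_singleton c) (by simpa using hc)

end IsDipath

/-- Lemma 3, converse direction: if `z` is a proper ancestor of `u` and `s ∈ J(z,t)`
for some in-neighbor `t` of `u`, then `s ∈ J(z,u)`. -/
theorem stmt9 (G : V → V → Prop) (hG : Acyclic G) (s z u : V)
    (hzu : Relation.TransGen G z u) (t : V) (ht : G t u)
    (hJ : IsJunction G s z t) : IsJunction G s z u := by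
  obtain ⟨-, p, q, hp, hq, hdisj⟩ := hJ
  have hup : u ∉ p := hp.notMem_of_transGen hG hzu
  have huq : u ∉ q := hq.notMem_of_transGen hG (.single ht)
  refine ⟨fun hzu_eq => hG z (hzu_eq ▸ hzu), p, q ++ [u], hp, hq.concat ht huq, ?_⟩
  intro x hxp hxq
  rcases List.mem_append.mp hxq with hxq | hxu
  · exact hdisj x hxp hxq
  · exact absurd (List.eq_of_mem_singleton hxu ▸ hxp) hup
end

section
/- (Lemma 4a) Let G be a DAG, T_s a DFS arborescence rooted at s, s1 a child of s, and z, w ∈ T_{s1} with z a proper ancestor of w in T_s. Let Z = (z = w'_0, w'_1, ..., w'_{k-1} = w) be the tree path from z to w in T_s. If s ∉ J(z, w'_i) for all i = 1, ..., k-2, and s ∈ J(z,w), then s ∈ J(w'_i, w) for all i = 1, ..., k-2. -/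
variable {V : Type*}

private lemma chain'_transGen' {G : V → V → Prop} {l : List V} (h : l.Chain' G) :
    ∀ j (hj : j < l.length) i (hij : i < j),
      Relation.TransGen G (l[i]'(by omega)) l[j] := by
  intro j
  induction j with
  | zero => omega
  | succ j ih =>
    intro hj i hij
    have step : G (l[j]'(by omega)) l[j+1] := by
      have := List.isChain_iff_getElem.mp h j (by omega)
      simpa using this
    rcases Nat.lt_or_ge i j with h' | h'
    · exact (ih (by omega) i h').tail step
    · have : i = j := by omega
      subst this
      exact Relation.TransGen.single step

private lemma nodup_of_chain'' {G : V → V → Prop} (hG : Acyclic G) {l : List V}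
    (h : l.Chain' G) : l.Nodup := by
  rw [List.nodup_iff_injective_get]
  rintro ⟨i, hi⟩ ⟨j, hj⟩ hij
  simp only [List.get_eq_getElem] at hij
  by_contra hne
  have hne' : i ≠ j := by simpa using hne
  rcases Nat.lt_or_ge i j with h' | h'
  · exact hG _ (hij ▸ chain'_transGen' h j hj i h')
  · have h'' : j < i := by omega
    exact hG _ (hij ▸ chain'_transGen' h i hi j h'')

private lemma take_head?' {q : List V} {n : ℕ} (h : q ≠ []) :
    (q.take (n+1)).head? = q.head? := by
  cases q with
  | nil => simp at h
  | cons a t => simp [List.take_cons]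

private lemma take_getLast?' {q : List V} {n : ℕ} (hn : n < q.length) :
    (q.take (n+1)).getLast? = some q[n] := by
  have hlen : (q.take (n+1)).length = n+1 := by simp [List.length_take]; omega
  rw [List.getLast?_eq_getElem?, hlen, Nat.add_sub_cancel,
    List.getElem?_eq_getElem (by omega)]
  simp

private lemma dipath_take' {G : V → V → Prop} {q : List V} {s w : V}
    (hq : IsDipath G q s w) {x : V} (hx : x ∈ q) :
    ∃ q', IsDipath G q' s x ∧ ∀ y ∈ q', y ∈ q := by
  obtain ⟨hc, hh, _, hnd⟩ := hq
  obtain ⟨n, hn, rfl⟩ := List.getElem_of_mem hx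
  have hq0 : q ≠ [] := by rintro rfl; simp at hh
  exact ⟨q.take (n+1), ⟨hc.take _, (take_head?' hq0).trans hh, take_getLast?' hn,
    hnd.sublist (List.take_sublist _ _)⟩, fun y hy => List.mem_of_mem_take hy⟩

/-- Lemma 4a: if along the tree path `Z` from `z` to `w` no internal vertex forms
a junction pair with `z` at `s`, but `s ∈ J(z,w)`, then `s ∈ J(w'_i, w)` for every
internal vertex `w'_i` of `Z`. -/
theorem stmt10 (G : V → V → Prop) (hG : Acyclic G) (s : V) (A : DFSArborescence G s)
    (s1 : V) (h1 : A.T s s1) (z w : V)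
    (hz : Relation.ReflTransGen A.T s1 z) (hw : Relation.ReflTransGen A.T s1 w)
    (Z : List V) (hZ : IsDipath A.T Z z w) (hlen : 2 ≤ Z.length)
    (hnot : ∀ i (hi : i < Z.length), 0 < i → i < Z.length - 1 →
      ¬ IsJunction G s z (Z.get ⟨i, hi⟩))
    (hJ : IsJunction G s z w) :
    ∀ i (hi : i < Z.length), 0 < i → i < Z.length - 1 →
      IsJunction G s (Z.get ⟨i, hi⟩) w := by
  intro i hi hi0 hii
  obtain ⟨hzw, p, q, hp, hq, hdisj⟩ := hJ
  obtain ⟨hZc, hZh, hZl, hZnd⟩ := hZ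
  have hZne : Z ≠ [] := by rintro rfl; simp at hlen
  -- identify the endpoints with indexed entries
  have hz0 : Z[0]'(by omega) = z := by
    rw [List.head?_eq_head hZne] at hZh
    simpa [List.head_eq_getElem] using hZh
  have hwlast : Z[Z.length - 1]'(by omega) = w := by
    rw [List.getLast?_eq_getElem?, List.getElem?_eq_getElem (by omega)] at hZl
    simpa using hZl
  have hinj : ∀ a b (ha : a < Z.length) (hb : b < Z.length),
      Z[a] = Z[b] → a = b := by
    intro a b ha hb hab
    have := List.nodup_iff_injective_get.mp hZnd
      (a₁ := ⟨a, ha⟩) (a₂ := ⟨b, hb⟩) (by simpa using hab)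
    simpa using this
  -- key: no internal vertex of Z lies on q
  have key : ∀ j (hj : j < Z.length), 0 < j → j < Z.length - 1 → Z[j] ∈ q → False := by
    intro j hj hj0 hjl hmem
    obtain ⟨q', hq', hsub⟩ := dipath_take' hq hmem
    refine hnot j hj hj0 hjl ⟨?_, p, q', hp, by simpa using hq',
      fun y hy hy' => hdisj y hy (hsub y hy')⟩
    intro hE
    have : (0 : ℕ) = j := hinj 0 j (by omega) hj (by rw [hz0]; simpa using hE)
    omega
  -- the tree-path prefix c from z to Z[i]
  have hclen : (Z.take (i+1)).length = i+1 := by simp [List.length_take]; omega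
  have hch : (Z.take (i+1)).head? = some z := (take_head?' hZne).trans hZh
  have hclast : (Z.take (i+1)).getLast? = some Z[i] := take_getLast?' hi
  have hcG : (Z.take (i+1)).Chain' G := (hZc.take _).imp (fun a b h => A.sub h)
  obtain ⟨t, hct⟩ : ∃ t, Z.take (i+1) = z :: t := by
    cases hc : Z.take (i+1) with
    | nil => rw [hc] at hch; simp at hch
    | cons a t =>
      rw [hc] at hch
      exact ⟨t, by rw [show a = z by simpa using hch]⟩
  have htlen : t.length = i := by rw [hct] at hclen; simpa using hclen
  have htne : t ≠ [] := by rw [← List.length_pos_iff, htlen]; omega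
  have hcnd : (z :: t).Nodup := hct ▸ hZnd.sublist (List.take_sublist _ _)
  have hzt : z ∉ t := (List.nodup_cons.mp hcnd).1
  rw [hct] at hcG hclast
  obtain ⟨hz_head, htG⟩ := List.isChain_cons.mp hcG
  have htlast : t.getLast? = some Z[i] := by
    rw [show z :: t = [z] ++ t from rfl, List.getLast?_append_of_ne_nil _ htne] at hclast
    exact hclast
  -- membership in t yields an internal index of Z
  have hmem_t : ∀ x ∈ t, ∃ j, ∃ hj : j < Z.length,
      0 < j ∧ j < Z.length - 1 ∧ Z[j] = x := by
    intro x hx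
    have hxc : x ∈ Z.take (i+1) := hct ▸ List.mem_cons_of_mem _ hx
    obtain ⟨m, hm, hmx⟩ := List.getElem_of_mem hxc
    rw [List.getElem_take] at hmx
    rw [hclen] at hm
    have hm0 : m ≠ 0 := by
      rintro rfl
      rw [hz0] at hmx
      exact hzt (hmx ▸ hx)
    exact ⟨m, by omega, by omega, by omega, hmx⟩
  -- the path r = p ++ t from s to Z[i]
  have hpne : p ≠ [] := by rintro rfl; exact (by simpa using hp.2.1)
  have hrG : (p ++ t).Chain' G := by
    refine List.isChain_append.mpr ⟨hp.1, htG, ?_⟩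
    intro x hx y hy
    rw [hp.2.2.1] at hx
    have hx' : x = z := (show z = x by simpa using hx).symm
    subst hx'
    exact hz_head y hy
  have hrh : (p ++ t).head? = some s := by
    rw [List.head?_append_of_ne_nil _ hpne]
    exact hp.2.1
  have hrl : (p ++ t).getLast? = some Z[i] := by
    rw [List.getLast?_append_of_ne_nil _ htne]
    exact htlast
  have hrnd : (p ++ t).Nodup := nodup_of_chain'' hG hrG
  refine ⟨?_, p ++ t, q, ⟨hrG, hrh, by simpa using hrl, hrnd⟩, hq, ?_⟩
  · intro hE
    have : i = Z.length - 1 := by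
      refine hinj i (Z.length - 1) hi (by omega) ?_
      rw [hwlast]
      simpa using hE
    omega
  · intro x hx hxq
    rcases List.mem_append.mp hx with hxp | hxt
    · exact hdisj x hxp hxq
    · obtain ⟨j, hj, hj0, hjl, rfl⟩ := hmem_t x hxt
      exact absurd hxq (fun h => key j hj hj0 hjl h)
end

section
/- Let G be a DAG, T_s a DFS arborescence rooted at s, and let s_i be a child of s in T_s. If u, v ∈ T_{s_i} are distinct and no arc of G from outside T_{s_i} enters T_{s_i} except the tree arc s→s_i, then s is not a junction of u and v (every directed path from s to a vertex of T_{s_i} passes through s_i). -/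
variable {V : Type*}

private lemma stmt17_aux {G T : V → V → Prop} {s si : V}
    (hno : ∀ p q, G p q → Relation.ReflTransGen T si q →
      ¬ Relation.ReflTransGen T si p → p = s ∧ q = si) :
    ∀ l : List V, l.Chain' G → ∀ a w, l.head? = some a → l.getLast? = some w →
      ¬ Relation.ReflTransGen T si a → Relation.ReflTransGen T si w → si ∈ l
  | [] => by simp
  | [x] => by
      intro _ a w ha hw hna hwmem
      simp at ha hw
      subst ha; subst hw
      exact absurd hwmem hna
  | x :: y :: rest => by
      intro hc a w ha hw hna hwmem
      simp at ha
      subst ha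
      obtain ⟨hxy, hc'⟩ := List.isChain_cons_cons.mp hc
      by_cases h : Relation.ReflTransGen T si y
      · have := hno x y hxy h hna
        simp [this.2]
      · have : si ∈ y :: rest :=
          stmt17_aux hno (y :: rest) hc' y w rfl (by simpa using hw) h hwmem
        exact List.mem_cons_of_mem _ this

/-- If the only arc of `G` entering the subarborescence `T_{si}` is the tree arc
`s → si`, then `s` is not a junction of any pair of distinct `u, v ∈ T_{si}`. -/
theorem stmt17 (G : V → V → Prop) (hG : Acyclic G) (s : V) (A : DFSArborescence G s)
    (si : V) (hsi : A.T s si) (u v : V)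
    (hu : Relation.ReflTransGen A.T si u) (hv : Relation.ReflTransGen A.T si v)
    (huv : u ≠ v)
    (hno : ∀ p q, G p q → Relation.ReflTransGen A.T si q →
      ¬ Relation.ReflTransGen A.T si p → p = s ∧ q = si) :
    ¬ IsJunction G s u v := by
  rintro ⟨-, p, q, ⟨hpc, hph, hpl, -⟩, ⟨hqc, hqh, hql, -⟩, hdisj⟩
  -- s is not in T_si
  have hns : ¬ Relation.ReflTransGen A.T si s := by
    intro h
    have : Relation.TransGen A.T s s := (Relation.TransGen.single hsi).trans_left h
    exact absurd (A.post_desc Relation.ReflTransGen.refl this) (lt_irrefl _)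
  have hsip : si ∈ p := stmt17_aux hno p hpc s u hph hpl hns hu
  have hsiq : si ∈ q := stmt17_aux hno q hqc s v hqh hql hns hv
  have : si = s := hdisj si hsip hsiq
  exact A.root_no_parent s (this ▸ hsi)
end
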